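/- arXiv:2602.15583 — 13 statements merged into one kernel-verified Lean document; each statement's English description precedes it below -/
import Mathlib

section
/- Let L be a frame (complete Heyting algebra) and S a sublocale of L. Then the sublocale c(⋀S) ∩ o(ν_{S^#}(⋀S)) is contained in S^{##}, where c(a) = ↑a is the closed sublocale, o(b) = {b → x | x ∈ L} is the open sublocale, S^# denotes the supplement (co-pseudocomplement) of S in the coframe of sublocales, and ν_T(a) = ⋀{t ∈ T | a ≤ t} is the frame surjection onto sublocale T. -/
open Set

variable {L : Type*} [Order.Frame L]

/-- The open sublocale determined by `a`. -/
def Opn (a : L) : Set L := Set.range (a ⇨ ·)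

/-- A sublocale: a subset closed under all meets and under `a ⇨ (-)`. -/
def IsSublocale (S : Set L) : Prop :=
  (∀ T ⊆ S, sInf T ∈ S) ∧ ∀ a : L, ∀ s ∈ S, a ⇨ s ∈ S

/-- Join of two sublocales in the coframe of sublocales. -/
def SJoin2 (S T : Set L) : Set L := {x | ∃ M ⊆ S ∪ T, sInf M = x}

/-- The supplement (co-pseudocomplement) of a sublocale: the least sublocale `T`
with `S ∨ T = L`. -/
def Supp (S : Set L) : Set L := ⋂₀ {T | IsSublocale T ∧ SJoin2 S T = Set.univ}

/-- The frame surjection onto a sublocale. -/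
def nu (T : Set L) (a : L) : L := sInf {t ∈ T | a ≤ t}

theorem stmt_0 (S : Set L) (hS : IsSublocale S) :
    Set.Ici (sInf S) ∩ Opn (nu (Supp S) (sInf S)) ⊆ Supp (Supp S) := by
  set b : L := nu (Supp S) (sInf S) with hb
  rintro x ⟨hx1, y, hy⟩
  -- x = b ⇨ x
  have hxfix : b ⇨ x = x := by
    rw [← hy]; simp [himp_himp]
  -- Supp S is closed under meets of its subsets
  have hSuppInf : ∀ M ⊆ Supp S, sInf M ∈ Supp S := by
    intro M hM T hT
    exact hT.1.1 M (fun m hm => hM hm T hT)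
  intro T hT
  obtain ⟨hTsub, hTjoin⟩ := hT
  have hxmem : x ∈ SJoin2 (Supp S) T := by rw [hTjoin]; trivial
  obtain ⟨M, hM, hMx⟩ := hxmem
  set s : L := sInf (M ∩ Supp S) with hs
  set t : L := sInf (M ∩ T) with ht
  have hsmem : s ∈ Supp S := hSuppInf _ (Set.inter_subset_right)
  have htmem : t ∈ T := hTsub.1 _ (Set.inter_subset_right)
  have hxst : x = s ⊓ t := by
    rw [hs, ht, ← sInf_union, ← Set.inter_union_distrib_left,
      Set.inter_eq_self_of_subset_left hM, hMx]
  have hxs : x ≤ s := hxst ▸ inf_le_left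
  have hbs : b ≤ s := sInf_le ⟨hsmem, le_trans hx1 hxs⟩
  have : x = b ⇨ t := by
    rw [← hxfix]
    conv_lhs => rw [hxst]
    rw [himp_inf_distrib, himp_eq_top_iff.2 hbs, top_inf_eq]
  rw [this]
  exact hTsub.2 b t htmem
end

section
/- Let L be a frame and S a sublocale of L. Then S is locally closed (i.e., S = c(a) ∩ o(b) for some a, b ∈ L) if and only if S ⊆ o(ν_{S^#}(⋀S)); and in that case S = c(⋀S) ∩ o(ν_{S^#}(⋀S)). -/
open Set

variable {L : Type*} [Order.Frame L]

/-! ### Auxiliary lemmas -/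

lemma mem_Opn {b x : L} : x ∈ Opn b ↔ b ⇨ x = x := by
  constructor
  · rintro ⟨y, rfl⟩
    exact himp_idem
  · intro h
    exact ⟨x, h⟩

lemma le_nu (T : Set L) (x : L) : x ≤ nu T x :=
  le_sInf fun _ ht => ht.2

lemma nu_le {T : Set L} {x t : L} (ht : t ∈ T) (hxt : x ≤ t) : nu T x ≤ t :=
  sInf_le ⟨ht, hxt⟩

lemma nu_mem {T : Set L} (hT : IsSublocale T) (x : L) : nu T x ∈ T :=
  hT.1 _ (sep_subset _ _)

lemma isSub_Opn (a : L) : IsSublocale (Opn a) := by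
  constructor
  · intro T hT
    refine mem_Opn.mpr (le_antisymm (le_sInf fun t ht => ?_) le_himp)
    calc a ⇨ sInf T ≤ a ⇨ t := himp_le_himp_left (sInf_le ht)
      _ = t := mem_Opn.mp (hT ht)
  · intro c s hs
    obtain ⟨y, rfl⟩ := hs
    exact ⟨c ⇨ y, (himp_left_comm _ _ _)⟩

lemma isSub_Ici (a : L) : IsSublocale (Set.Ici a) := by
  constructor
  · intro T hT
    exact le_sInf fun t ht => hT ht
  · intro c s hs
    exact le_trans hs le_himp

/-- Any element of a join is the meet of its two closures. -/
lemma sjoin_decomp {A B : Set L} (hA : IsSublocale A) (hB : IsSublocale B) {x : L}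
    (hx : x ∈ SJoin2 A B) : x = nu A x ⊓ nu B x := by
  obtain ⟨M, hM, rfl⟩ := hx
  set x := sInf M with hxdef
  have hMsplit : M = (M ∩ A) ∪ (M ∩ B) := by
    rw [← Set.inter_union_distrib_left]
    exact (Set.inter_eq_left.mpr hM).symm
  have hsplit : x = sInf (M ∩ A) ⊓ sInf (M ∩ B) := by
    rw [hxdef]; conv_lhs => rw [hMsplit]
    exact sInf_union
  have hsA : sInf (M ∩ A) ∈ A := hA.1 _ (Set.inter_subset_right)
  have hsB : sInf (M ∩ B) ∈ B := hB.1 _ (Set.inter_subset_right)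
  have hxA : x ≤ sInf (M ∩ A) := le_sInf fun t ht => sInf_le ht.1
  have hxB : x ≤ sInf (M ∩ B) := le_sInf fun t ht => sInf_le ht.1
  refine le_antisymm (le_inf (le_nu _ _) (le_nu _ _)) ?_
  calc nu A x ⊓ nu B x ≤ sInf (M ∩ A) ⊓ sInf (M ∩ B) :=
        inf_le_inf (nu_le hsA hxA) (nu_le hsB hxB)
    _ = x := hsplit.symm

lemma mem_sjoin_pair {A B : Set L} {s t : L} (hs : s ∈ A) (ht : t ∈ B) :
    s ⊓ t ∈ SJoin2 A B := by
  refine ⟨{s, t}, ?_, sInf_pair⟩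
  rintro m (rfl | rfl)
  · exact Or.inl hs
  · exact Or.inr ht

lemma subset_sjoin_left {A B : Set L} : A ⊆ SJoin2 A B := fun x hx =>
  ⟨{x}, by simpa using Or.inl hx, sInf_singleton⟩

lemma subset_sjoin_right {A B : Set L} : B ⊆ SJoin2 A B := fun x hx =>
  ⟨{x}, by simpa using Or.inr hx, sInf_singleton⟩

lemma isSub_sjoin {A B : Set L} (hA : IsSublocale A) (hB : IsSublocale B) :
    IsSublocale (SJoin2 A B) := by
  constructor
  · intro T hT
    have hdec : ∀ x ∈ T, x = nu A x ⊓ nu B x := fun x hx => sjoin_decomp hA hB (hT hx)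
    have hsA : sInf (nu A '' T) ∈ A := hA.1 _ (by rintro _ ⟨x, _, rfl⟩; exact nu_mem hA x)
    have hsB : sInf (nu B '' T) ∈ B := hB.1 _ (by rintro _ ⟨x, _, rfl⟩; exact nu_mem hB x)
    have : sInf T = sInf (nu A '' T) ⊓ sInf (nu B '' T) := by
      refine le_antisymm (le_inf ?_ ?_) ?_
      · exact le_sInf (by rintro _ ⟨x, hx, rfl⟩; exact (sInf_le hx).trans (le_nu _ _))
      · exact le_sInf (by rintro _ ⟨x, hx, rfl⟩; exact (sInf_le hx).trans (le_nu _ _))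
      · refine le_sInf fun x hx => ?_
        calc sInf (nu A '' T) ⊓ sInf (nu B '' T) ≤ nu A x ⊓ nu B x :=
              inf_le_inf (sInf_le ⟨x, hx, rfl⟩) (sInf_le ⟨x, hx, rfl⟩)
          _ = x := (hdec x hx).symm
    rw [this]
    exact mem_sjoin_pair hsA hsB
  · intro c x hx
    have hdx := sjoin_decomp hA hB hx
    have hsA : nu A x ∈ A := nu_mem hA x
    have hsB : nu B x ∈ B := nu_mem hB x
    set s := nu A x with hsdef
    set t := nu B x with htdef
    have : c ⇨ x = (c ⇨ s) ⊓ (c ⇨ t) := by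
      rw [hdx, himp_inf_distrib]
    rw [this]
    exact mem_sjoin_pair (hA.2 c _ hsA) (hB.2 c _ hsB)

lemma isSub_supp (S : Set L) : IsSublocale (Supp S) := by
  constructor
  · intro T hT
    intro A hA
    exact hA.1.1 _ fun t ht => hT ht A hA
  · intro c x hx
    intro A hA
    exact hA.1.2 c _ (hx A hA)

/-- Key property of the supplement. -/
lemma himp_nu_mem_supp {S : Set L} (hS : IsSublocale S) (x : L) :
    nu S x ⇨ x ∈ Supp S := by
  intro T hT
  obtain ⟨hTsub, hTj⟩ := hT
  have hx : x ∈ SJoin2 S T := by rw [hTj]; trivial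
  have hdx := sjoin_decomp hS hTsub hx
  have htT : nu T x ∈ T := nu_mem hTsub x
  set ν := nu S x with hνdef
  set t := nu T x with htdef
  have : ν ⇨ x = ν ⇨ t := by
    rw [hdx, himp_inf_distrib, himp_self, top_inf_eq]
  rw [this]
  exact hTsub.2 _ _ htT

theorem stmt_1 (S : Set L) (hS : IsSublocale S) :
    ((∃ a b : L, S = Set.Ici a ∩ Opn b) ↔ S ⊆ Opn (nu (Supp S) (sInf S))) ∧
    ((∃ a b : L, S = Set.Ici a ∩ Opn b) →
      S = Set.Ici (sInf S) ∩ Opn (nu (Supp S) (sInf S))) := by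
  set s₀ := sInf S with hs₀def
  set b' := nu (Supp S) s₀ with hb'def
  have hs₀b' : s₀ ≤ b' := le_nu _ _
  -- Key: if S ⊆ Opn b' then S = Ici s₀ ∩ Opn b'.
  have key : S ⊆ Opn b' → S = Set.Ici s₀ ∩ Opn b' := by
    intro hsub
    apply Set.Subset.antisymm
    · intro s hs
      exact ⟨sInf_le hs, hsub hs⟩
    · rintro x ⟨hx1, hx2⟩
      have hbx : b' ⇨ x = x := mem_Opn.mp hx2
      have hxν : x ≤ nu S x := le_nu _ _
      have ht : nu S x ⇨ x ∈ Supp S := himp_nu_mem_supp hS x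
      have hxt : x ≤ nu S x ⇨ x := le_himp
      have hb't : b' ≤ nu S x ⇨ x := nu_le ht (hx1.trans hxt)
      have hxdec : x = nu S x ⊓ (nu S x ⇨ x) := by
        rw [inf_himp, inf_eq_right.mpr hxν]
      have hfin : x = b' ⇨ nu S x := by
        conv_lhs => rw [← hbx, hxdec]
        rw [himp_inf_distrib, himp_eq_top_iff.mpr hb't, inf_top_eq]
      rw [hfin]
      exact hS.2 _ _ (nu_mem hS x)
  -- Forward direction: locally closed implies S ⊆ Opn b'.
  have fwd : (∃ a b : L, S = Set.Ici a ∩ Opn b) → S ⊆ Opn b' := by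
    rintro ⟨a, b, hab⟩
    set a' := b ⇨ a with ha'def
    set b'' := a' ⊔ b with hb''def
    have haa' : a ≤ a' := le_himp
    have hchar : ∀ x : L, x ∈ S ↔ a' ≤ x ∧ b'' ⇨ x = x := by
      intro x
      rw [hab]
      constructor
      · rintro ⟨hx1, hx2⟩
        have hbx : b ⇨ x = x := mem_Opn.mp hx2
        have ha'x : a' ≤ x := by
          calc a' = b ⇨ a := rfl
            _ ≤ b ⇨ x := himp_le_himp_left hx1
            _ = x := hbx
        refine ⟨ha'x, ?_⟩
        rw [hb''def, sup_himp_distrib, himp_eq_top_iff.mpr ha'x, top_inf_eq, hbx]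
      · rintro ⟨hx1, hx2⟩
        have hbx : b ⇨ x = x := by
          rw [hb''def, sup_himp_distrib, himp_eq_top_iff.mpr hx1, top_inf_eq] at hx2
          exact hx2
        exact ⟨Set.mem_Ici.mpr (haa'.trans hx1), mem_Opn.mpr hbx⟩
    have ha'S : a' ∈ S := by
      rw [hchar]
      refine ⟨le_rfl, ?_⟩
      rw [hb''def, sup_himp_distrib, himp_self, top_inf_eq, ha'def, himp_idem]
    have hs₀a' : s₀ = a' := by
      refine le_antisymm (sInf_le ha'S) (le_sInf fun s hs => ((hchar s).mp hs).1)
    -- The witness sublocale T = Opn a' ∨ Ici b''.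
    set T := SJoin2 (Opn a') (Set.Ici b'') with hTdef
    have hT : IsSublocale T := isSub_sjoin (isSub_Opn a') (isSub_Ici b'')
    have hTuniv : SJoin2 S T = Set.univ := by
      apply Set.eq_univ_of_forall
      intro x
      refine ⟨{b'' ⇨ (x ⊔ a'), x ⊔ b'', a' ⇨ x}, ?_, ?_⟩
      · rintro m (rfl | rfl | rfl)
        · left
          rw [hchar]
          refine ⟨le_himp_iff.mpr ?_, himp_idem⟩
          exact (inf_le_left).trans le_sup_right
        · exact Or.inr (subset_sjoin_right (Set.mem_Ici.mpr le_sup_right))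
        · exact Or.inr (subset_sjoin_left ⟨x, rfl⟩)
      · rw [sInf_insert, sInf_pair]
        refine le_antisymm ?_ ?_
        · -- p ⊓ (q ⊓ r) ≤ x
          set z := (b'' ⇨ (x ⊔ a')) ⊓ ((x ⊔ b'') ⊓ (a' ⇨ x)) with hzdef
          have hz1 : z ≤ b'' ⇨ (x ⊔ a') := inf_le_left
          have hz2 : z ≤ x ⊔ b'' := inf_le_right.trans inf_le_left
          have hz3 : z ≤ a' ⇨ x := inf_le_right.trans inf_le_right
          have hzb : z ⊓ b'' ≤ x := by
            have h1 : z ⊓ b'' ≤ x ⊔ a' := by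
              calc z ⊓ b'' ≤ (b'' ⇨ (x ⊔ a')) ⊓ b'' := inf_le_inf_right _ hz1
                _ ≤ x ⊔ a' := by rw [inf_comm]; exact inf_himp_le
            have h2 : z ⊓ a' ≤ x := by
              calc z ⊓ a' ≤ (a' ⇨ x) ⊓ a' := inf_le_inf_right _ hz3
                _ ≤ x := by rw [inf_comm]; exact inf_himp_le
            calc z ⊓ b'' ≤ z ⊓ (x ⊔ a') := le_inf (inf_le_left) h1
              _ = (z ⊓ x) ⊔ (z ⊓ a') := inf_sup_left z x a'
              _ ≤ x ⊔ x := sup_le_sup inf_le_right h2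
              _ = x := sup_idem x
          calc z = z ⊓ (x ⊔ b'') := (inf_eq_left.mpr hz2).symm
            _ = (z ⊓ x) ⊔ (z ⊓ b'') := inf_sup_left z x b''
            _ ≤ x ⊔ x := sup_le_sup inf_le_right hzb
            _ = x := sup_idem x
        · -- x ≤ p ⊓ (q ⊓ r)
          refine le_inf (le_himp_iff.mpr (inf_le_left.trans le_sup_left)) (le_inf le_sup_left le_himp)
    have hsupp_sub : Supp S ⊆ T := Set.sInter_subset_of_mem ⟨hT, hTuniv⟩
    have hb'T : b' ∈ T := hsupp_sub (nu_mem (isSub_supp S) s₀)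
    have hdec : b' = nu (Opn a') b' ⊓ nu (Set.Ici b'') b' :=
      sjoin_decomp (isSub_Opn a') (isSub_Ici b'') hb'T
    have ha'b' : a' ≤ b' := hs₀a' ▸ hs₀b'
    have hν₁ : (⊤ : L) ≤ nu (Opn a') b' := by
      refine le_sInf fun t ht => ?_
      obtain ⟨htO, hbt⟩ := ht
      calc (⊤ : L) = a' ⇨ b' := (himp_eq_top_iff.mpr ha'b').symm
        _ ≤ a' ⇨ t := himp_le_himp_left hbt
        _ = t := mem_Opn.mp htO
    have hν₂ : b'' ≤ nu (Set.Ici b'') b' := le_sInf fun t ht => ht.1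
    have hbb' : b'' ≤ b' := by
      rw [hdec]
      exact le_inf (le_top.trans hν₁) hν₂
    intro s hs
    obtain ⟨_, hbs⟩ := (hchar s).mp hs
    refine mem_Opn.mpr (le_antisymm ?_ le_himp)
    calc b' ⇨ s ≤ b'' ⇨ s := himp_le_himp_right hbb'
      _ = s := hbs
  exact ⟨⟨fwd, fun h => ⟨s₀, b', key h⟩⟩, fun h => key (fwd h)⟩
end

section
/- Let L be a frame and a, b ∈ L with a ≤ b and b → a = a. Then for S = c(a) ∩ o(b) one has ⋀S = a and ν_{S^#}(⋀S) = b. Consequently, locally closed sublocales of L correspond bijectively to pairs (a, b) ∈ L × L with a ≤ b and b → a = a. -/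
open Set

variable {L : Type*} [Order.Frame L]

lemma himp_sInf' (c : L) (M : Set L) : c ⇨ sInf M = sInf ((c ⇨ ·) '' M) := by
  apply le_antisymm
  · exact le_sInf (by rintro _ ⟨m, hm, rfl⟩; exact himp_le_himp_left (sInf_le hm))
  · rw [le_himp_iff]
    refine le_sInf fun m hm => ?_
    calc sInf ((c ⇨ ·) '' M) ⊓ c ≤ (c ⇨ m) ⊓ c := inf_le_inf_right c (sInf_le ⟨m, hm, rfl⟩)
    _ ≤ m := himp_inf_le

lemma locClosed_sInf (a b : L) (hba : b ⇨ a = a) : sInf (Set.Ici a ∩ Opn b) = a :=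
  le_antisymm (sInf_le ⟨le_refl a, ⟨a, hba⟩⟩) (le_sInf fun _ ht => ht.1)

lemma T0_sublocale (a b : L) : IsSublocale (SJoin2 (Opn a) (Set.Ici b)) := by
  constructor
  · intro T hT
    choose M hM hM2 using fun t (ht : t ∈ T) => hT ht
    refine ⟨⋃ t : T, M t.1 t.2, Set.iUnion_subset fun t => hM t.1 t.2, ?_⟩
    apply le_antisymm
    · refine le_sInf fun t ht => ?_
      exact le_trans (sInf_le_sInf (Set.subset_iUnion (fun t : ↥T => M t.1 t.2) ⟨t, ht⟩)) (hM2 t ht).le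
    · refine le_sInf fun m hm => ?_
      obtain ⟨⟨t, ht⟩, hmt⟩ := Set.mem_iUnion.1 hm
      exact le_trans (sInf_le ht) ((hM2 t ht).symm.le.trans (sInf_le hmt))
  · rintro c s ⟨M, hM, rfl⟩
    refine ⟨(c ⇨ ·) '' M, ?_, (himp_sInf' c M).symm⟩
    rintro _ ⟨m, hm, rfl⟩
    rcases hM hm with h | h
    · obtain ⟨z, rfl⟩ := h
      exact Or.inl ⟨c ⇨ z, himp_left_comm a c z⟩
    · exact Or.inr (le_trans h le_himp)

lemma join_univ (a b : L) (hab : a ≤ b) :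
    SJoin2 (Set.Ici a ∩ Opn b) (SJoin2 (Opn a) (Set.Ici b)) = Set.univ := by
  refine Set.eq_univ_of_forall fun x => ?_
  refine ⟨{b ⇨ (a ⊔ x), a ⇨ x, b ⊔ x}, ?_, ?_⟩
  · rintro m (rfl | rfl | rfl)
    · exact Or.inl ⟨le_himp_iff.2 (inf_le_left.trans le_sup_left), ⟨a ⊔ x, rfl⟩⟩
    · exact Or.inr ⟨{a ⇨ x}, fun m hm => by simp_all [Opn], sInf_singleton⟩
    · exact Or.inr ⟨{b ⊔ x}, fun m hm => by simp_all, sInf_singleton⟩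
  · rw [sInf_insert, sInf_insert, sInf_singleton]
    apply le_antisymm
    · calc (b ⇨ (a ⊔ x)) ⊓ ((a ⇨ x) ⊓ (b ⊔ x))
          = ((b ⇨ (a ⊔ x)) ⊓ (a ⇨ x) ⊓ b) ⊔ ((b ⇨ (a ⊔ x)) ⊓ (a ⇨ x) ⊓ x) := by
            rw [← inf_assoc, inf_sup_left]
      _ ≤ ((a ⊔ x) ⊓ (a ⇨ x)) ⊔ x := by
            apply sup_le_sup
            · calc (b ⇨ (a ⊔ x)) ⊓ (a ⇨ x) ⊓ b ≤ ((b ⇨ (a ⊔ x)) ⊓ b) ⊓ (a ⇨ x) := by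
                    rw [inf_right_comm]
              _ ≤ (a ⊔ x) ⊓ (a ⇨ x) := inf_le_inf_right _ himp_inf_le
            · exact inf_le_right
      _ ≤ x := by
            rw [inf_comm, inf_sup_left]
            exact sup_le (sup_le himp_inf_le inf_le_right) le_rfl
    · exact le_inf (le_himp_iff.2 (inf_le_left.trans le_sup_right))
        (le_inf le_himp le_sup_right)

lemma b_mem_supp (a b : L) (hab : a ≤ b) : b ∈ Supp (Set.Ici a ∩ Opn b) := by
  rintro T ⟨hsub, hjoin⟩
  have hb : (b : L) ∈ SJoin2 (Set.Ici a ∩ Opn b) T := hjoin ▸ Set.mem_univ b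
  obtain ⟨M, hM, hMb⟩ := hb
  have hbm : ∀ m ∈ M, b ≤ m := fun m hm => hMb ▸ sInf_le hm
  have key : sInf (M ∩ T) = b := by
    apply le_antisymm
    · refine le_trans (le_sInf fun m hm => ?_) hMb.le
      rcases hM hm with ⟨hma, z, hz⟩ | h
      · have hbz : b ≤ z := by
          have h2 := hbm _ hm
          rw [← hz] at h2
          simpa using le_himp_iff.1 h2
        calc sInf (M ∩ T) ≤ ⊤ := le_top
          _ ≤ m := by rw [← hz]; exact le_himp_iff.2 (inf_le_right.trans hbz)
      · exact sInf_le ⟨hm, h⟩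
    · exact hMb ▸ sInf_le_sInf Set.inter_subset_left
  exact key ▸ hsub.1 _ Set.inter_subset_right

lemma T0_forces (a b : L) (hab : a ≤ b) :
    ∀ t ∈ SJoin2 (Opn a) (Set.Ici b), a ≤ t → b ≤ t := by
  rintro _ ⟨M, hM, rfl⟩ hat
  refine le_sInf fun m hm => ?_
  rcases hM hm with ⟨z, rfl⟩ | h
  · have ha : a ≤ a ⇨ z := hat.trans (sInf_le hm)
    have haz : a ≤ z := by simpa using le_himp_iff.1 ha
    exact le_himp_iff.2 (inf_le_right.trans haz)
  · exact h

lemma nu_supp (a b : L) (hab : a ≤ b) (hba : b ⇨ a = a) :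
    nu (Supp (Set.Ici a ∩ Opn b)) a = b := by
  apply le_antisymm
  · exact sInf_le ⟨b_mem_supp a b hab, hab⟩
  · refine le_sInf fun t ⟨htS, hat⟩ => ?_
    exact T0_forces a b hab t (htS _ ⟨T0_sublocale a b, join_univ a b hab⟩) hat

lemma pair_cond (x y : L) : ((y ⇨ x) ⊔ y) ⇨ (y ⇨ x) = y ⇨ x := by
  rw [sup_himp_distrib, himp_self, top_inf_eq, himp_idem]

lemma locClosed_normalize (x y : L) :
    Set.Ici x ∩ Opn y = Set.Ici (y ⇨ x) ∩ Opn ((y ⇨ x) ⊔ y) := by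
  set a := y ⇨ x with ha_def
  ext t
  constructor
  · rintro ⟨hxt, z, rfl⟩
    have hxt' : x ≤ y ⇨ z := hxt
    have ha : a ≤ y ⇨ z := by
      have h2 := himp_le_himp_left (c := y) hxt' 
      rwa [himp_idem] at h2
    exact ⟨ha, ⟨y ⇨ z, by
      show (a ⊔ y) ⇨ (y ⇨ z) = y ⇨ z
      rw [sup_himp_distrib, himp_eq_top_iff.2 ha, top_inf_eq, himp_idem]⟩⟩
  · rintro ⟨hat, z, rfl⟩
    have hat' : a ≤ (a ⊔ y) ⇨ z := hat
    have haz : a ≤ z := by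
      have h2 := le_himp_iff.1 hat' 
      rwa [inf_sup_self] at h2
    have hle : y ⇨ z ≤ a ⇨ z := le_himp_iff.2 (inf_le_right.trans haz)
    refine ⟨le_himp.trans hat', ⟨z, ?_⟩⟩
    show y ⇨ z = (a ⊔ y) ⇨ z
    rw [sup_himp_distrib]
    exact (inf_eq_right.2 hle).symm

theorem stmt_2 (a b : L) (hab : a ≤ b) (hba : b ⇨ a = a) :
    sInf (Set.Ici a ∩ Opn b) = a ∧
    nu (Supp (Set.Ici a ∩ Opn b)) (sInf (Set.Ici a ∩ Opn b)) = b ∧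
    Function.Bijective
      (fun p : {p : L × L // p.1 ≤ p.2 ∧ p.2 ⇨ p.1 = p.1} =>
        (⟨Set.Ici p.1.1 ∩ Opn p.1.2, p.1.1, p.1.2, rfl⟩ :
          {T : Set L // ∃ x y : L, T = Set.Ici x ∩ Opn y})) := by
  have h1 := locClosed_sInf a b hba
  refine ⟨h1, by rw [h1]; exact nu_supp a b hab hba, ?_, ?_⟩
  · rintro ⟨⟨a1, b1⟩, h1le, h1h⟩ ⟨⟨a2, b2⟩, h2le, h2h⟩ h
    have hs : Set.Ici a1 ∩ Opn b1 = Set.Ici a2 ∩ Opn b2 := congrArg Subtype.val h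
    have ha : a1 = a2 := by
      rw [← locClosed_sInf a1 b1 h1h, hs, locClosed_sInf a2 b2 h2h]
    have hb : b1 = b2 := by
      have e1 := nu_supp a1 b1 h1le h1h
      have e2 := nu_supp a2 b2 h2le h2h
      rw [← e1, ← e2, hs, ha]
    exact Subtype.ext (Prod.ext ha hb)
  · rintro ⟨T, x, y, rfl⟩
    exact ⟨⟨(y ⇨ x, (y ⇨ x) ⊔ y), le_sup_left, pair_cond x y⟩,
      Subtype.ext (locClosed_normalize x y).symm⟩
end

section
/- Let L be a frame and (a,b), (x,y) ∈ LC(L), where LC(L) = {(a,b) ∈ L × L | a ≤ b and b → a = a}. Then c(a) ∩ o(b) ⊆ c(x) ∩ o(y) if and only if x ≤ a and b ≤ a ∨ y. -/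
open Set

variable {L : Type*} [Order.Frame L]

theorem stmt_3 (a b x y : L)
    (h1 : a ≤ b) (h2 : b ⇨ a = a) (h3 : x ≤ y) (h4 : y ⇨ x = x) :
    Set.Ici a ∩ Opn b ⊆ Set.Ici x ∩ Opn y ↔ x ≤ a ∧ b ≤ a ⊔ y := by
  constructor
  · intro h
    have ha : a ∈ Set.Ici x ∩ Opn y := h ⟨le_refl a, a, h2⟩
    refine ⟨ha.1, ?_⟩
    have hb : (b ⇨ (a ⊔ y)) ∈ Set.Ici a ∩ Opn b :=
      ⟨le_himp_iff.2 (le_trans inf_le_left le_sup_left), a ⊔ y, rfl⟩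
    obtain ⟨-, s, hs⟩ := h hb
    have : y ⇨ (b ⇨ (a ⊔ y)) = b ⇨ (a ⊔ y) := by
      rw [← hs]; simp [himp_himp]
    have htop : y ⇨ (b ⇨ (a ⊔ y)) = ⊤ := by
      rw [himp_himp]
      exact himp_eq_top_iff.2 (le_trans inf_le_left le_sup_right)
    have : b ⇨ (a ⊔ y) = ⊤ := this ▸ htop
    exact himp_eq_top_iff.1 this
  · rintro ⟨hxa, hby⟩ t ⟨hat, s, hs⟩
    have hbt : b ⇨ t = t := by rw [← hs]; simp [himp_himp]
    refine ⟨le_trans hxa hat, t, ?_⟩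
    show y ⇨ t = t
    refine le_antisymm ?_ le_himp
    calc y ⇨ t ≤ b ⇨ t := by
          rw [le_himp_iff]
          calc (y ⇨ t) ⊓ b ≤ (y ⇨ t) ⊓ (a ⊔ y) := inf_le_inf_left _ hby
            _ = ((y ⇨ t) ⊓ a) ⊔ ((y ⇨ t) ⊓ y) := inf_sup_left _ _ _
            _ ≤ t ⊔ t := sup_le_sup (le_trans inf_le_right (hat)) himp_inf_le
            _ = t := sup_idem t
      _ = t := hbt
end

section
/- Let L be a frame. Define on LC(L) = {(a,b) ∈ L × L | a ≤ b, b → a = a} the relation (x,y) ⊑ (a,b) iff x ≤ a and b ≤ a ∨ y. Then ⊑ is a partial order, and LC(L) is a join-semilattice in which the join is given by (x,y) ⊔ (u,v) = lc(x ∨ u, y ∧ v), where lc(a,b) = (b → a, (b → a) ∨ b). -/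
open Set

variable {L : Type*} [Order.Frame L]

/-- Canonical representations of locally closed sublocales. -/
def LCset (L : Type*) [Order.Frame L] : Set (L × L) :=
  {p | p.1 ≤ p.2 ∧ p.2 ⇨ p.1 = p.1}

/-- The canonical-representation map `lc`. -/
def lc (p : L × L) : L × L := (p.2 ⇨ p.1, (p.2 ⇨ p.1) ⊔ p.2)

/-- The order on `LCset L`: `(x,y) ⊑ (a,b)` iff `x ≤ a` and `b ≤ a ∨ y`. -/
def LCle (p q : L × L) : Prop := p.1 ≤ q.1 ∧ q.2 ≤ q.1 ⊔ p.2

/-- The join in `LCset L`. -/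
def lcSup (p q : L × L) : L × L := lc (p.1 ⊔ q.1, p.2 ⊓ q.2)

/-- The join in the coframe of sublocales of a family of locally closed sublocales. -/
def SJoinP (U : Set (L × L)) : Set L :=
  {x | ∃ M ⊆ ⋃ p ∈ U, Set.Ici p.1 ∩ Opn p.2, sInf M = x}

/-- `m` is the greatest lower bound of `F` in the poset `(LCset L, LCle)`. -/
def lcIsGLB (F : Set (L × L)) (m : L × L) : Prop :=
  m ∈ LCset L ∧ (∀ p ∈ F, LCle m p) ∧
    ∀ q ∈ LCset L, (∀ p ∈ F, LCle q p) → LCle q m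

/-- `F` is an admissible family in the join-semilattice `LCset L`, with meet `m`:
the meet exists and distributes over binary joins. -/
def lcAdmissible (F : Set (L × L)) (m : L × L) : Prop :=
  lcIsGLB F m ∧ ∀ b ∈ LCset L, lcIsGLB ((fun p => lcSup b p) '' F) (lcSup b m)


lemma himp_sup_self_himp (a b : L) : ((b ⇨ a) ⊔ b) ⇨ (b ⇨ a) = b ⇨ a := by
  apply le_antisymm
  · rw [le_himp_iff]
    calc (((b ⇨ a) ⊔ b) ⇨ (b ⇨ a)) ⊓ b
        ≤ (((b ⇨ a) ⊔ b) ⇨ (b ⇨ a)) ⊓ ((b ⇨ a) ⊔ b) ⊓ b :=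
          le_inf (le_inf inf_le_left (inf_le_right.trans le_sup_right)) inf_le_right
      _ ≤ (b ⇨ a) ⊓ b := inf_le_inf_right b himp_inf_le
      _ ≤ a := himp_inf_le
  · exact le_himp_iff.2 inf_le_left

theorem stmt_4 :
    (∀ p ∈ LCset L, LCle p p) ∧
    (∀ p ∈ LCset L, ∀ q ∈ LCset L, LCle p q → LCle q p → p = q) ∧
    (∀ p ∈ LCset L, ∀ q ∈ LCset L, ∀ r ∈ LCset L, LCle p q → LCle q r → LCle p r) ∧
    (∀ p ∈ LCset L, ∀ q ∈ LCset L,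
      lcSup p q ∈ LCset L ∧ LCle p (lcSup p q) ∧ LCle q (lcSup p q) ∧
        ∀ r ∈ LCset L, LCle p r → LCle q r → LCle (lcSup p q) r) := by
  refine ⟨fun p _ => ⟨le_rfl, le_sup_right⟩, ?_, ?_, ?_⟩
  · rintro p hp q hq ⟨h1, h2⟩ ⟨h3, h4⟩
    have e1 : p.1 = q.1 := le_antisymm h1 h3
    have e2 : p.2 = q.2 := by
      apply le_antisymm
      · exact h4.trans (sup_le (h1.trans hq.1) le_rfl)
      · exact h2.trans (sup_le (h3.trans hp.1) le_rfl)
    exact Prod.ext e1 e2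
  · rintro p _ q _ r _ ⟨h1, h2⟩ ⟨h3, h4⟩
    refine ⟨h1.trans h3, h4.trans ?_⟩
    calc r.1 ⊔ q.2 ≤ r.1 ⊔ (q.1 ⊔ p.2) := sup_le_sup_left h2 _
      _ ≤ r.1 ⊔ p.2 := by
          rw [← sup_assoc]; exact sup_le_sup_right (sup_le le_rfl h3) _
  · rintro p hp q hq
    set b := p.2 ⊓ q.2 with hb
    set s := b ⇨ (p.1 ⊔ q.1) with hs
    have hx : p.1 ⊔ q.1 ≤ s := le_himp_iff.2 inf_le_left
    have hmem : lcSup p q ∈ LCset L := by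
      refine ⟨le_sup_left, ?_⟩
      exact himp_sup_self_himp (p.1 ⊔ q.1) b
    refine ⟨hmem, ⟨(le_sup_left.trans hx), ?_⟩, ⟨(le_sup_right.trans hx), ?_⟩, ?_⟩
    · exact sup_le le_sup_left (inf_le_left.trans le_sup_right)
    · exact sup_le le_sup_left (inf_le_right.trans le_sup_right)
    · rintro r hr ⟨h1, h2⟩ ⟨h3, h4⟩
      constructor
      · show s ≤ r.1
        rw [← hr.2, le_himp_iff]
        have hd : r.2 ≤ r.1 ⊔ b := by
          rw [hb, sup_inf_left]
          exact le_inf h2 h4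
        calc s ⊓ r.2 ≤ s ⊓ (r.1 ⊔ b) := inf_le_inf_left s hd
          _ = s ⊓ r.1 ⊔ s ⊓ b := inf_sup_left s r.1 b
          _ ≤ r.1 := sup_le inf_le_right
              (himp_inf_le.trans (sup_le h1 h3))
      · show r.2 ≤ r.1 ⊔ (s ⊔ b)
        rw [hb, sup_inf_left, sup_inf_left]
        exact le_inf (h2.trans (sup_le le_sup_left (le_sup_right.trans le_sup_right)))
          (h4.trans (sup_le le_sup_left (le_sup_right.trans le_sup_right)))
end

section
/- Let L be a frame and lc(a,b) = (b → a, (b → a) ∨ b). Then for all (a,b), (x,y) ∈ L × L, lc(a,b) ⊔ lc(x,y) = lc(a ∨ x, y ∧ b) in the join-semilattice LC(L). -/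
open Set

variable {L : Type*} [Order.Frame L]

theorem stmt_5 (a b x y : L) :
    lcSup (lc (a, b)) (lc (x, y)) = lc (a ⊔ x, y ⊓ b) := by
  simp only [lcSup, lc]
  set c := b ⇨ a with hc
  set d := y ⇨ x with hd
  have hcb : c ⊓ b ≤ a := himp_inf_le
  have hdy : d ⊓ y ≤ x := himp_inf_le
  have hac : a ≤ c := le_himp_iff.2 inf_le_left
  have hxd : x ≤ d := le_himp_iff.2 inf_le_left
  have hch : c ≤ (y ⊓ b) ⇨ (a ⊔ x) := by
    rw [le_himp_iff]
    calc c ⊓ (y ⊓ b) ≤ c ⊓ b := by gcongr; exact inf_le_right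
    _ ≤ a := hcb
    _ ≤ a ⊔ x := le_sup_left
  have hdh : d ≤ (y ⊓ b) ⇨ (a ⊔ x) := by
    rw [le_himp_iff]
    calc d ⊓ (y ⊓ b) ≤ d ⊓ y := by gcongr; exact inf_le_left
    _ ≤ x := hdy
    _ ≤ a ⊔ x := le_sup_right
  have hyb : y ⊓ b ≤ (c ⊔ b) ⊓ (d ⊔ y) :=
    le_inf (inf_le_right.trans le_sup_right) (inf_le_left.trans le_sup_right)
  have key1 : ((c ⊔ b) ⊓ (d ⊔ y)) ⇨ (c ⊔ d) = (y ⊓ b) ⇨ (a ⊔ x) := by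
    apply le_antisymm
    · rw [le_himp_iff]
      calc (((c ⊔ b) ⊓ (d ⊔ y)) ⇨ (c ⊔ d)) ⊓ (y ⊓ b)
          ≤ ((((c ⊔ b) ⊓ (d ⊔ y)) ⇨ (c ⊔ d)) ⊓ ((c ⊔ b) ⊓ (d ⊔ y))) ⊓ (y ⊓ b) := by
            rw [inf_assoc]; exact inf_le_inf_left _ (le_inf hyb le_rfl)
        _ ≤ (c ⊔ d) ⊓ (y ⊓ b) := by gcongr; exact himp_inf_le
        _ = c ⊓ (y ⊓ b) ⊔ d ⊓ (y ⊓ b) := inf_sup_right _ _ _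
        _ ≤ a ⊔ x := by
            apply sup_le
            · exact le_sup_left.trans' ((inf_le_inf_left _ inf_le_right).trans hcb)
            · exact le_sup_right.trans' ((inf_le_inf_left _ inf_le_left).trans hdy)
    · rw [le_himp_iff]
      simp only [inf_sup_left, inf_sup_right, sup_le_iff]
      refine ⟨⟨?_, ?_⟩, ?_, ?_⟩
      · exact inf_le_of_right_le (inf_le_left.trans le_sup_left)
      · exact inf_le_of_right_le (inf_le_right.trans le_sup_right)
      · exact inf_le_of_right_le (inf_le_left.trans le_sup_left)
      · exact ((inf_le_inf_left _ (inf_comm b y).le).trans himp_inf_le).trans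
          (sup_le (hac.trans le_sup_left) (hxd.trans le_sup_right))
  have key2 : (y ⊓ b ⇨ a ⊔ x) ⊔ ((c ⊔ b) ⊓ (d ⊔ y)) = (y ⊓ b ⇨ a ⊔ x) ⊔ (y ⊓ b) := by
    apply le_antisymm
    · apply sup_le le_sup_left
      rw [inf_sup_right, inf_sup_left, inf_sup_left]
      refine sup_le (sup_le ?_ ?_) (sup_le ?_ ?_)
      · exact (inf_le_left.trans hch).trans le_sup_left
      · exact (inf_le_left.trans hch).trans le_sup_left
      · exact (inf_le_right.trans hdh).trans le_sup_left
      · exact (inf_comm b y).le.trans le_sup_right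
    · exact sup_le_sup_left hyb _
  rw [key1, key2]
end

section
/- Let S be a join-semilattice, C a coframe, and ψ : S^op → C an injective meet-semilattice homomorphism such that every ψ(a) is complemented in C and every element of C can be written as ⋀_{j∈J} (ψ(u_j) ∨ ψ(v_j)*) with u_j, v_j ∈ S, where (−)* denotes pseudocomplement in C. Then a family {a_i}_{i∈I} ⊆ S with existing meet is admissible if and only if ψ(⋀_i a_i) = ⋁_i ψ(a_i). -/
open Set

/-- Pseudocomplement in a coframe. -/
def pc {C : Type*} [Order.Coframe C] (x : C) : C := sSup {y | x ⊓ y = ⊥}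

lemma compl_inf_le_iff {C : Type*} [Order.Coframe C] {x y : C} (h : IsCompl x y)
    {w z : C} : w ⊓ x ≤ z ↔ w ≤ z ⊔ y := by
  constructor
  · intro hw
    calc w = w ⊓ (x ⊔ y) := by rw [h.sup_eq_top, inf_top_eq]
    _ = (w ⊓ x) ⊔ (w ⊓ y) := inf_sup_left _ _ _
    _ ≤ z ⊔ y := sup_le_sup hw inf_le_right
  · intro hw
    calc w ⊓ x ≤ (z ⊔ y) ⊓ x := inf_le_inf_right _ hw
    _ = (z ⊓ x) ⊔ (y ⊓ x) := inf_sup_right _ _ _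
    _ ≤ z := by rw [(h.symm.inf_eq_bot : y ⊓ x = ⊥)]; simp

lemma pc_of_isCompl {C : Type*} [Order.Coframe C] {x y : C} (h : IsCompl x y) :
    pc x = y := by
  apply le_antisymm
  · apply sSup_le
    intro z hz
    have : z ⊓ x ≤ ⊥ := le_of_eq (by rw [inf_comm]; exact hz)
    have := (compl_inf_le_iff h).mp this
    simpa using this

  · exact le_sSup h.inf_eq_bot

theorem stmt_7 {S C : Type*} [SemilatticeSup S] [Order.Coframe C]
    (ψ : S → C) (hinj : Function.Injective ψ)
    (hmeet : ∀ x y : S, ψ (x ⊔ y) = ψ x ⊓ ψ y)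
    (hcompl : ∀ s : S, ∃ y : C, IsCompl (ψ s) y)
    (hgen : ∀ c : C, ∃ J : Set (S × S), c = ⨅ p ∈ J, ψ p.1 ⊔ pc (ψ p.2))
    {ι : Type*} (a : ι → S) (m : S) (hm : IsGLB (Set.range a) m) :
    (∀ b : S, IsGLB (Set.range fun i => b ⊔ a i) (b ⊔ m)) ↔
      ψ m = ⨆ i, ψ (a i) := by
  have hle : ∀ x y : S, x ≤ y ↔ ψ y ≤ ψ x := by
    intro x y
    constructor
    · intro h
      have : ψ (x ⊔ y) = ψ x ⊓ ψ y := hmeet x y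
      rw [sup_eq_right.mpr h] at this
      rw [this]; exact inf_le_left
    · intro h
      have : ψ (x ⊔ y) = ψ y := by rw [hmeet, inf_eq_right.mpr h]
      have := hinj this
      exact le_of_sup_eq this
  constructor
  · -- admissible → ψ m = ⨆ ψ (a i)
    intro hadm
    apply le_antisymm
    · obtain ⟨J, hJ⟩ := hgen (⨆ i, ψ (a i))
      rw [hJ]
      apply le_iInf₂
      intro p hp
      obtain ⟨yv, hv⟩ := hcompl p.2
      rw [pc_of_isCompl hv]
      -- each a i satisfies p.1 ≤ p.2 ⊔ a i
      have hub : ∀ i, p.1 ≤ p.2 ⊔ a i := by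
        intro i
        have h1 : ψ (a i) ≤ ψ p.1 ⊔ yv := by
          calc ψ (a i) ≤ ⨆ i, ψ (a i) := le_iSup (fun i => ψ (a i)) i
          _ = ⨅ p ∈ J, ψ p.1 ⊔ pc (ψ p.2) := hJ
          _ ≤ ψ p.1 ⊔ pc (ψ p.2) := iInf₂_le p hp
          _ = ψ p.1 ⊔ yv := by rw [pc_of_isCompl hv]
        have h2 : ψ (a i) ⊓ ψ p.2 ≤ ψ p.1 := (compl_inf_le_iff hv).mpr h1
        have h3 : ψ (p.2 ⊔ a i) ≤ ψ p.1 := by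
          rw [hmeet, inf_comm]; exact h2
        exact (hle _ _).mpr h3
      have h4 : p.1 ≤ p.2 ⊔ m := by
        apply (hadm p.2).2
        rintro _ ⟨i, rfl⟩
        exact hub i
      have h5 : ψ (p.2 ⊔ m) ≤ ψ p.1 := (hle _ _).mp h4
      rw [hmeet] at h5
      exact (compl_inf_le_iff hv).mp (by rw [inf_comm]; exact h5)
    · exact iSup_le fun i => (hle _ _).mp (hm.1 ⟨i, rfl⟩)
  · -- ψ m = ⨆ ψ (a i) → admissible
    intro hψ b
    constructor
    · rintro _ ⟨i, rfl⟩
      exact sup_le_sup_left (hm.1 ⟨i, rfl⟩) b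
    · intro c hc
      apply (hle _ _).mpr
      rw [hmeet, hψ]
      obtain ⟨yb, hb⟩ := hcompl b
      have : (⨆ i, ψ (a i)) ≤ ψ c ⊔ yb := by
        apply iSup_le
        intro i
        apply (compl_inf_le_iff hb).mp
        have : ψ (b ⊔ a i) ≤ ψ c := (hle _ _).mp (hc ⟨i, rfl⟩)
        rw [hmeet] at this
        rw [inf_comm]; exact this
      have := (compl_inf_le_iff hb).mpr this
      rw [inf_comm] at this; exact this
end

section
/- Let S be a join-semilattice and {a_i}_{i∈I} ⊆ S an admissible family (its meet exists and distributes over binary joins). Then for every b ∈ S, the family {a_i ∨ b}_{i∈I} is admissible, with meet (⋀_i a_i) ∨ b. -/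
open Set

variable {S : Type*} [SemilatticeSup S]

/-- A family `F` in a join-semilattice is admissible with meet `m` if `m` is its
greatest lower bound and for every `b`, `b ⊔ m` is the greatest lower bound of
`{b ⊔ s | s ∈ F}`. -/
def AdmissibleSet (F : Set S) (m : S) : Prop :=
  IsGLB F m ∧ ∀ b : S, IsGLB ((fun x => b ⊔ x) '' F) (b ⊔ m)

/-- A nonempty upper set closed under admissible meets. -/
def AdmUpperSet (V : Set S) : Prop :=
  V.Nonempty ∧ IsUpperSet V ∧ ∀ F ⊆ V, ∀ m, AdmissibleSet F m → m ∈ V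

/-- Meets of admissible subfamilies of `U`. -/
def AClose (U : Set S) : Set S := {x | ∃ F ⊆ U, AdmissibleSet F x}

/-- The join in the frame of admissible upper sets. -/
def AUjoin (𝒱 : Set (Set S)) : Set S := ⋂₀ {W | AdmUpperSet W ∧ ∀ V ∈ 𝒱, V ⊆ W}

theorem stmt_8 (F : Set S) (m : S) (h : AdmissibleSet F m) (b : S) :
    AdmissibleSet ((fun x => x ⊔ b) '' F) (m ⊔ b) := by
  constructor
  · have := h.2 b
    have himg : (fun x => x ⊔ b) '' F = (fun x => b ⊔ x) '' F := by
      simp [sup_comm]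
    rw [himg, sup_comm]
    exact this
  · intro c
    have := h.2 (c ⊔ b)
    have himg : (fun x => c ⊔ x) '' ((fun x => x ⊔ b) '' F)
        = (fun x => (c ⊔ b) ⊔ x) '' F := by
      rw [Set.image_image]
      apply Set.image_congr'
      intro x
      ac_rfl
    have heq : c ⊔ (m ⊔ b) = (c ⊔ b) ⊔ m := by
      rw [sup_assoc, sup_comm b m, ← sup_assoc]
    rw [himg, heq]
    exact this
end

section
/- Let S be a join-semilattice and {S_i}_{i∈I} a collection of admissible families in S. If the family {⋀ S_i | i ∈ I} of their meets is admissible, then the union ⋃_i S_i is an admissible family, with meet ⋀_i ⋀ S_i. -/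
open Set

variable {S : Type*} [SemilatticeSup S]

theorem stmt_9 {ι : Type*} (F : ι → Set S) (m : ι → S)
    (h : ∀ i, AdmissibleSet (F i) (m i))
    (M : S) (hM : AdmissibleSet (Set.range m) M) :
    AdmissibleSet (⋃ i, F i) M := by
  constructor
  · constructor
    · rintro x hx
      obtain ⟨i, hi⟩ := Set.mem_iUnion.mp hx
      exact le_trans (hM.1.1 ⟨i, rfl⟩) ((h i).1.1 hi)
    · intro c hc
      refine hM.1.2 ?_
      rintro _ ⟨i, rfl⟩
      exact (h i).1.2 fun x hx => hc (Set.mem_iUnion.mpr ⟨i, hx⟩)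
  · intro b
    constructor
    · rintro _ ⟨x, hx, rfl⟩
      obtain ⟨i, hi⟩ := Set.mem_iUnion.mp hx
      exact le_trans (sup_le_sup_left (le_trans (hM.1.1 ⟨i, rfl⟩) ((h i).1.1 hi)) b) le_rfl
    · intro c hc
      refine (hM.2 b).2 ?_
      rintro _ ⟨_, ⟨i, rfl⟩, rfl⟩
      exact ((h i).2 b).2 fun y hy => by
        obtain ⟨x, hx, rfl⟩ := hy
        exact hc ⟨x, Set.mem_iUnion.mpr ⟨i, hx⟩, rfl⟩
end

section
/- Let S be a join-semilattice and U ⊆ S a nonempty upper set. Define A(U) = {⋀F | F ⊆ U, F admissible}. Then A(U) is the least admissible upper set containing U, i.e., A(U) is an upper set closed under admissible meets, contains U, and is contained in every admissible upper set containing U. -/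
open Set

variable {S : Type*} [SemilatticeSup S]

theorem stmt_10 (U : Set S) (hU : U.Nonempty) (hup : IsUpperSet U) :
    U ⊆ AClose U ∧ AdmUpperSet (AClose U) ∧
      ∀ V : Set S, AdmUpperSet V → U ⊆ V → AClose U ⊆ V := by
  have hsub : U ⊆ AClose U := by
    intro x hx
    refine ⟨{x}, singleton_subset_iff.2 hx, isGLB_singleton, fun b => ?_⟩
    rw [image_singleton]; exact isGLB_singleton
  have hupA : IsUpperSet (AClose U) := by
    intro x y hxy hx
    obtain ⟨F, hFU, hglb, hadm⟩ := hx
    refine ⟨(fun s => y ⊔ s) '' F, ?_, ?_, ?_⟩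
    · rintro _ ⟨s, hs, rfl⟩
      exact hup le_sup_right (hFU hs)
    · have h := hadm y
      rwa [sup_eq_left.mpr hxy] at h
    · intro b
      have h := hadm (b ⊔ y)
      have himg : (fun z => b ⊔ z) '' ((fun s => y ⊔ s) '' F)
          = (fun z => (b ⊔ y) ⊔ z) '' F := by
        rw [← image_comp]
        simp [Function.comp_def, sup_assoc]
      have h2 : (b ⊔ y) ⊔ x = b ⊔ y := by
        rw [sup_assoc, sup_eq_left.mpr hxy]
      rw [himg]
      rwa [h2] at h
  have hclose : ∀ F ⊆ AClose U, ∀ m, AdmissibleSet F m → m ∈ AClose U := by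
    intro F hF m hm
    choose G hG using fun s (hs : s ∈ F) => hF hs
    refine ⟨⋃ s, ⋃ hs : s ∈ F, G s hs, ?_, ?_, ?_⟩
    · intro t ht
      simp only [mem_iUnion] at ht
      obtain ⟨s, hs, hts⟩ := ht
      exact (hG s hs).1 hts
    · constructor
      · intro t ht
        simp only [mem_iUnion] at ht
        obtain ⟨s, hs, hts⟩ := ht
        exact le_trans (hm.1.1 hs) ((hG s hs).2.1.1 hts)
      · intro c hc
        refine hm.1.2 fun s hs => (hG s hs).2.1.2 fun t ht => hc ?_
        simp only [mem_iUnion]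
        exact ⟨s, hs, ht⟩
    · intro b
      constructor
      · rintro _ ⟨t, ht, rfl⟩
        simp only [mem_iUnion] at ht
        obtain ⟨s, hs, hts⟩ := ht
        have h1 : b ⊔ m ≤ b ⊔ s := (hm.2 b).1 ⟨s, hs, rfl⟩
        have h2 : b ⊔ s ≤ b ⊔ t := ((hG s hs).2.2 b).1 ⟨t, hts, rfl⟩
        exact le_trans h1 h2
      · intro c hc
        refine (hm.2 b).2 ?_
        rintro _ ⟨s, hs, rfl⟩
        refine ((hG s hs).2.2 b).2 ?_
        rintro _ ⟨t, ht, rfl⟩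
        refine hc ⟨t, ?_, rfl⟩
        simp only [mem_iUnion]
        exact ⟨s, hs, ht⟩
  refine ⟨hsub, ⟨hU.mono hsub, hupA, hclose⟩, ?_⟩
  intro V hV hUV x hx
  obtain ⟨F, hFU, hFx⟩ := hx
  exact hV.2.2 F (hFU.trans hUV) x hFx
end

section
/- Let S be a join-semilattice and {a_i}_{i∈I} ⊆ S a family whose meet exists. Then ↑(⋀_i a_i) is the join of {↑a_i}_{i∈I} in the frame AU(S) of admissible upper sets if and only if the family {a_i} is admissible. -/
open Set

variable {S : Type*} [SemilatticeSup S]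

theorem stmt_12 {ι : Type*} (a : ι → S) (m : S) (hm : IsGLB (Set.range a) m) :
    (AdmUpperSet (Set.Ici m) ∧ (∀ i, Set.Ici (a i) ⊆ Set.Ici m) ∧
        ∀ V : Set S, AdmUpperSet V → (∀ i, Set.Ici (a i) ⊆ V) → Set.Ici m ⊆ V) ↔
      ∀ b : S, IsGLB (Set.range fun i => b ⊔ a i) (b ⊔ m) := by
  constructor
  · rintro ⟨-, -, hmin⟩ b
    constructor
    · rintro x ⟨i, rfl⟩
      exact sup_le_sup_left (hm.1 ⟨i, rfl⟩) b
    · intro c hc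
      have hV : AdmUpperSet {x : S | c ≤ b ⊔ x} := by
        refine ⟨⟨c ⊔ b, le_sup_left.trans le_sup_right⟩,
          fun x y hxy hx => hx.trans (sup_le_sup_left hxy b), ?_⟩
        rintro F hF m' ⟨-, hadm⟩
        exact (hadm b).2 (by rintro y ⟨x, hxF, rfl⟩; exact hF hxF)
      have hsub : Set.Ici m ⊆ {x : S | c ≤ b ⊔ x} :=
        hmin _ hV (fun i x hx => (hc ⟨i, rfl⟩).trans (sup_le_sup_left hx b))
      exact hsub self_mem_Ici
  · intro hadm
    have hrange : AdmissibleSet (Set.range a) m :=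
      ⟨hm, fun b => by rw [← Set.range_comp]; exact hadm b⟩
    refine ⟨⟨⟨m, le_rfl⟩, fun x y hxy hx => hx.trans hxy, ?_⟩,
      fun i x hx => (hm.1 ⟨i, rfl⟩).trans hx, ?_⟩
    · rintro F hF m' ⟨hglb, -⟩
      exact hglb.2 fun x hx => hF hx
    · rintro V ⟨-, hVup, hVcl⟩ hV x hx
      have hmV : m ∈ V := hVcl (Set.range a) (by rintro y ⟨i, rfl⟩; exact hV i le_rfl) m hrange
      exact hVup hx hmV
end

section
/- Let L be a frame. Then S_b(L), the poset of smooth sublocales (joins of locally closed sublocales) ordered by inclusion, is isomorphic to AU(LC(L)), the frame of admissible upper sets of the join-semilattice LC(L). In particular, S_b(L) together with the map (a,b) ↦ c(a) ∩ o(b) is the Bruns–Lakser completion of LC(L)^op. -/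
open Set

variable {L : Type*} [Order.Frame L]

/-- Smooth sublocales: joins of locally closed sublocales. -/
def SmoothSub (T : Set L) : Prop := ∃ U : Set (L × L), T = SJoinP U

/-- Admissible upper sets of the join-semilattice `LCset L`. -/
def lcAUS (L : Type*) [Order.Frame L] (U : Set (L × L)) : Prop :=
  U.Nonempty ∧ U ⊆ LCset L ∧
    (∀ p ∈ U, ∀ q ∈ LCset L, LCle p q → q ∈ U) ∧
    ∀ F ⊆ U, ∀ m, lcAdmissible F m → m ∈ U

/-
Meeting with a locally closed sublocale `c(a) ∩ o(b)` distributes over joins: if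
`t ∈ c(a) ∩ o(b)` is the meet of elements `m` of sublocales `Sᵢ`, then `t = b ⇨ t` is also the
meet of the elements `b ⇨ m ∈ c(a) ∩ o(b) ∩ Sᵢ`. So if `c(a) ∩ o(b)` lies in the join of an
admissible upper set `U`, it is the join of the sublocales of the members of `U` above `(a, b)`,
which makes `(a, b)` their admissible meet, hence a member of `U`. Conversely, testing the
distributivity of an admissible meet `m` against the closed pairs `(t, ⊤)` shows that every
`t ∈ c(m.1) ∩ o(m.2)` lies in the join of the family, so the pairs whose sublocale lies in a
smooth sublocale form an admissible upper set.
-/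

def lcSub (p : L × L) : Set L := Set.Ici p.1 ∩ Opn p.2

def lcBelow (T : Set L) : Set (L × L) := {p | p ∈ LCset L ∧ lcSub p ⊆ T}

lemma himp_sInf_eq (a : L) (M : Set L) : a ⇨ sInf M = sInf ((a ⇨ ·) '' M) := by
  rw [sInf_image, sInf_eq_iInf]
  simp only [himp_iInf_eq]

lemma mem_Opn_iff {b t : L} : t ∈ Opn b ↔ b ⇨ t = t := by
  constructor
  · rintro ⟨x, rfl⟩
    rw [himp_himp, inf_idem]
  · exact fun h => ⟨t, h⟩

lemma Opn_inf (a b : L) : Opn (a ⊓ b) = Opn a ∩ Opn b := by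
  ext t
  simp only [mem_inter_iff, mem_Opn_iff, ← himp_himp]
  constructor
  · intro h
    have hb : b ⇨ t = t := le_antisymm (le_himp.trans h.le) le_himp
    exact ⟨by rwa [hb] at h, hb⟩
  · rintro ⟨ha, hb⟩
    rw [hb, ha]

lemma Opn_top : Opn (⊤ : L) = univ :=
  eq_univ_of_forall fun _ => mem_Opn_iff.2 top_himp

lemma mem_lcSub {p : L × L} {t : L} : t ∈ lcSub p ↔ p.1 ≤ t ∧ p.2 ⇨ t = t :=
  and_congr Iff.rfl mem_Opn_iff

lemma isSublocale_lcSub (p : L × L) : IsSublocale (lcSub p) := by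
  refine ⟨fun T hT => mem_lcSub.2 ⟨le_sInf fun m hm => (mem_lcSub.1 (hT hm)).1, ?_⟩,
    fun x t ht => mem_lcSub.2 ⟨(mem_lcSub.1 ht).1.trans le_himp, ?_⟩⟩
  · refine le_antisymm (le_sInf fun m hm => ?_) le_himp
    exact (himp_le_himp_left (sInf_le hm)).trans_eq (mem_lcSub.1 (hT hm)).2
  · rw [himp_himp, inf_comm, ← himp_himp, (mem_lcSub.1 ht).2]

lemma lcSub_mk_top (t : L) : lcSub ((t, ⊤) : L × L) = Ici t := by
  rw [lcSub, Opn_top, inter_univ]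

lemma mk_top_mem_LCset (t : L) : ((t, ⊤) : L × L) ∈ LCset L := ⟨le_top, top_himp⟩

lemma lc_mem_LCset (p : L × L) : lc p ∈ LCset L := by
  refine ⟨le_sup_left, ?_⟩
  change ((p.2 ⇨ p.1) ⊔ p.2) ⇨ (p.2 ⇨ p.1) = p.2 ⇨ p.1
  rw [sup_himp_distrib, himp_self, top_inf_eq, himp_himp, inf_idem]

lemma lcSub_lc (p : L × L) : lcSub (lc p) = lcSub p := by
  ext t
  simp only [mem_lcSub, lc, sup_himp_distrib]
  constructor
  · rintro ⟨h₁, h₂⟩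
    rw [himp_eq_top_iff.2 h₁, top_inf_eq] at h₂
    exact ⟨le_himp.trans h₁, h₂⟩
  · rintro ⟨h₁, h₂⟩
    have h : p.2 ⇨ p.1 ≤ t := h₂ ▸ himp_le_himp_left h₁
    exact ⟨h, by rw [himp_eq_top_iff.2 h, top_inf_eq, h₂]⟩

lemma lcSub_lcSup (p q : L × L) : lcSub (lcSup p q) = lcSub p ∩ lcSub q := by
  rw [lcSup, lcSub_lc, lcSub, lcSub, lcSub, ← Ici_inter_Ici, Opn_inf, inter_inter_inter_comm]

lemma lcSub_subset_of_LCle {p q : L × L} (h : LCle p q) : lcSub q ⊆ lcSub p := by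
  intro t ht
  rw [mem_lcSub] at ht ⊢
  refine ⟨h.1.trans ht.1, le_antisymm ?_ le_himp⟩
  calc p.2 ⇨ t = (q.1 ⇨ t) ⊓ (p.2 ⇨ t) := by rw [himp_eq_top_iff.2 ht.1, top_inf_eq]
    _ = (q.1 ⊔ p.2) ⇨ t := (sup_himp_distrib _ _ _).symm
    _ ≤ q.2 ⇨ t := himp_le_himp_right h.2
    _ = t := ht.2

lemma LCle_of_lcSub_subset {p q : L × L} (hq : q.2 ⇨ q.1 = q.1) (h : lcSub q ⊆ lcSub p) :
    LCle p q := by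
  have hq₁ := mem_lcSub.1 (h (mem_lcSub.2 ⟨le_rfl, hq⟩))
  -- `u := q.2 ⇨ (q.1 ⊔ p.2)` lies in `lcSub q`; being above `p.2` and in `o(p.2)` forces `u = ⊤`
  set u := q.2 ⇨ (q.1 ⊔ p.2)
  have hu : u ∈ lcSub p := h (mem_lcSub.2 ⟨le_sup_left.trans le_himp, by rw [himp_himp, inf_idem]⟩)
  have hu_top : u = ⊤ := by
    rw [← (mem_lcSub.1 hu).2, himp_eq_top_iff.2 (le_sup_right.trans le_himp)]
  exact ⟨hq₁.1, himp_eq_top_iff.1 hu_top⟩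

lemma LCle_lcSup_left (p q : L × L) : LCle p (lcSup p q) :=
  LCle_of_lcSub_subset (lc_mem_LCset _).2 ((lcSub_lcSup p q).trans_subset inter_subset_left)

lemma LCle_lcSup_right (p q : L × L) : LCle q (lcSup p q) :=
  LCle_of_lcSub_subset (lc_mem_LCset _).2 ((lcSub_lcSup p q).trans_subset inter_subset_right)

lemma mem_SJoinP {U : Set (L × L)} {t : L} :
    t ∈ SJoinP U ↔ ∃ M ⊆ ⋃ p ∈ U, lcSub p, sInf M = t :=
  Iff.rfl

lemma sInf_mem_SJoinP {U : Set (L × L)} {M : Set L} (h : M ⊆ SJoinP U) : sInf M ∈ SJoinP U := by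
  choose f hf₁ hf₂ using fun m : M => h m.2
  refine ⟨⋃ m : M, f m, iUnion_subset hf₁, ?_⟩
  exact (sSup_iUnion (β := Lᵒᵈ) f).trans ((iInf_congr hf₂).trans (sInf_eq_iInf' M).symm)

lemma SmoothSub.sInf_mem {T : Set L} (hT : SmoothSub T) {M : Set L} (hM : M ⊆ T) :
    sInf M ∈ T := by
  obtain ⟨V, rfl⟩ := hT
  exact sInf_mem_SJoinP hM

lemma lcSub_subset_SJoinP {U : Set (L × L)} {q : L × L} (hq : q ∈ U) : lcSub q ⊆ SJoinP U :=
  fun t ht => ⟨{t}, singleton_subset_iff.2 (mem_iUnion₂.2 ⟨q, hq, ht⟩), sInf_singleton⟩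

lemma SJoinP_subset {U : Set (L × L)} {T : Set L} (hT : ∀ M ⊆ T, sInf M ∈ T)
    (h : ∀ q ∈ U, lcSub q ⊆ T) : SJoinP U ⊆ T := by
  rintro _ ⟨M, hM, rfl⟩
  refine hT M fun m hm => ?_
  obtain ⟨q, hq, hmq⟩ := mem_iUnion₂.1 (hM hm)
  exact h q hq hmq

lemma SJoinP_mono {U V : Set (L × L)} (h : U ⊆ V) : SJoinP U ⊆ SJoinP V :=
  SJoinP_subset (fun _ => sInf_mem_SJoinP) fun _ hq => lcSub_subset_SJoinP (h hq)

lemma lcSub_inter_SJoinP (p : L × L) (U : Set (L × L)) :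
    lcSub p ∩ SJoinP U = SJoinP ((lcSup p ·) '' U) := by
  refine Subset.antisymm ?_ (SJoinP_subset (fun M hM => ⟨(isSublocale_lcSub p).1 M
    (hM.trans inter_subset_left), sInf_mem_SJoinP (hM.trans inter_subset_right)⟩) ?_)
  · rintro _ ⟨ht, M, hM, rfl⟩
    refine ⟨(p.2 ⇨ ·) '' M, ?_, by rw [← himp_sInf_eq, (mem_lcSub.1 ht).2]⟩
    rintro _ ⟨m, hm, rfl⟩
    obtain ⟨q, hq, hmq⟩ := mem_iUnion₂.1 (hM hm)
    refine mem_iUnion₂.2 ⟨lcSup p q, mem_image_of_mem _ hq, ?_⟩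
    rw [← lcSub, lcSub_lcSup]
    refine ⟨mem_lcSub.2 ⟨?_, by rw [himp_himp, inf_idem]⟩, (isSublocale_lcSub q).2 _ _ hmq⟩
    exact ((mem_lcSub.1 ht).1.trans (sInf_le hm)).trans le_himp
  · rintro _ ⟨q, hq, rfl⟩
    rw [lcSub_lcSup]
    exact inter_subset_inter_right _ (lcSub_subset_SJoinP hq)

lemma lcSub_subset_SJoinP_of_lcAdmissible {F : Set (L × L)} {m : L × L}
    (hm : lcAdmissible F m) : lcSub m ⊆ SJoinP F := by
  intro t ht
  set s := nu (SJoinP F) t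
  have hs : s ∈ SJoinP F := sInf_mem_SJoinP fun _ hj => hj.1
  have hts : t ≤ s := le_sInf fun _ hj => hj.2
  -- `(s, ⊤)` is below every `lcSup (t, ⊤) q`, `q ∈ F`, hence below their meet `lcSup (t, ⊤) m`
  have hlow : ∀ r ∈ (lcSup (t, ⊤) ·) '' F, LCle (s, ⊤) r := by
    rintro _ ⟨q, hq, rfl⟩
    refine LCle_of_lcSub_subset (lc_mem_LCset _).2 ?_
    rw [lcSub_lcSup, lcSub_mk_top, lcSub_mk_top]
    exact fun x hx => sInf_le ⟨lcSub_subset_SJoinP hq hx.2, hx.1⟩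
  have hsm := lcSub_subset_of_LCle
    ((hm.2 (t, ⊤) (mk_top_mem_LCset t)).2.2 _ (mk_top_mem_LCset s) hlow)
  rw [lcSub_lcSup, lcSub_mk_top, lcSub_mk_top] at hsm
  rwa [le_antisymm hts (hsm ⟨le_refl t, ht⟩)]

lemma lcIsGLB_of_lcSub_eq_SJoinP {F : Set (L × L)} {p : L × L} (hp : p ∈ LCset L)
    (hF : F ⊆ LCset L) (h : lcSub p = SJoinP F) : lcIsGLB F p := by
  refine ⟨hp, fun q hq => LCle_of_lcSub_subset (hF hq).2 (h ▸ lcSub_subset_SJoinP hq),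
    fun r _ hr => LCle_of_lcSub_subset hp.2 ?_⟩
  rw [h]
  exact SJoinP_subset (isSublocale_lcSub r).1 fun q hq => lcSub_subset_of_LCle (hr q hq)

lemma lcAdmissible_of_lcSub_eq_SJoinP {F : Set (L × L)} {p : L × L} (hp : p ∈ LCset L)
    (hF : F ⊆ LCset L) (h : lcSub p = SJoinP F) : lcAdmissible F p := by
  refine ⟨lcIsGLB_of_lcSub_eq_SJoinP hp hF h, fun b _ =>
    lcIsGLB_of_lcSub_eq_SJoinP (lc_mem_LCset _) ?_ ?_⟩
  · rintro _ ⟨q, -, rfl⟩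
    exact lc_mem_LCset _
  · rw [lcSub_lcSup, h, lcSub_inter_SJoinP]

lemma mem_of_lcSub_subset_SJoinP {U : Set (L × L)} (hU : lcAUS L U) {p : L × L}
    (hp : p ∈ LCset L) (h : lcSub p ⊆ SJoinP U) : p ∈ U := by
  set F := {q | q ∈ U ∧ LCle p q}
  have hF : lcSub p = SJoinP F := by
    refine Subset.antisymm ?_
      (SJoinP_subset (isSublocale_lcSub p).1 fun q hq => lcSub_subset_of_LCle hq.2)
    calc lcSub p = lcSub p ∩ SJoinP U := (inter_eq_left.2 h).symm
      _ = SJoinP ((lcSup p ·) '' U) := lcSub_inter_SJoinP p U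
      _ ⊆ SJoinP F := SJoinP_mono ?_
    rintro _ ⟨q, hq, rfl⟩
    exact ⟨hU.2.2.1 q hq _ (lc_mem_LCset _) (LCle_lcSup_right p q), LCle_lcSup_left p q⟩
  exact hU.2.2.2 F (fun q hq => hq.1) p
    (lcAdmissible_of_lcSub_eq_SJoinP hp (fun q hq => hU.2.1 hq.1) hF)

lemma lcAUS_lcBelow {T : Set L} (hT : ∀ M ⊆ T, sInf M ∈ T) : lcAUS L (lcBelow T) := by
  refine ⟨⟨(⊤, ⊤), mk_top_mem_LCset ⊤, ?_⟩, fun p hp => hp.1,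
    fun p hp q hq hpq => ⟨hq, (lcSub_subset_of_LCle hpq).trans hp.2⟩,
    fun F hF m hm => ⟨hm.1.1, (lcSub_subset_SJoinP_of_lcAdmissible hm).trans
      (SJoinP_subset hT fun q hq => (hF hq).2)⟩⟩
  rw [lcSub_mk_top, Ici_top, singleton_subset_iff, ← sInf_empty]
  exact hT ∅ (empty_subset T)

lemma lcBelow_SJoinP {U : Set (L × L)} (hU : lcAUS L U) : lcBelow (SJoinP U) = U :=
  Subset.antisymm (fun _ hp => mem_of_lcSub_subset_SJoinP hU hp.1 hp.2)
    fun _ hq => ⟨hU.2.1 hq, lcSub_subset_SJoinP hq⟩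

lemma SJoinP_lcBelow {T : Set L} (hT : SmoothSub T) : SJoinP (lcBelow T) = T := by
  obtain ⟨V, rfl⟩ := hT
  refine Subset.antisymm (SJoinP_subset (fun _ => sInf_mem_SJoinP) fun q hq => hq.2)
    (SJoinP_subset (fun _ => sInf_mem_SJoinP) fun q hq => ?_)
  rw [← lcSub_lc]
  exact lcSub_subset_SJoinP ⟨lc_mem_LCset q, (lcSub_lc q).symm ▸ lcSub_subset_SJoinP hq⟩

theorem stmt_15 :
    ∃ e : {T : Set L // SmoothSub T} ≃o {U : Set (L × L) // lcAUS L U},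
      ∀ T : {T : Set L // SmoothSub T},
        (e T : Set (L × L)) =
          {p | p ∈ LCset L ∧ Set.Ici p.1 ∩ Opn p.2 ⊆ (T : Set L)} :=
  ⟨Equiv.toOrderIso
    { toFun := fun T => ⟨lcBelow T, lcAUS_lcBelow fun _ => T.2.sInf_mem⟩
      invFun := fun U => ⟨SJoinP U, U, rfl⟩
      left_inv := fun T => Subtype.ext (SJoinP_lcBelow T.2)
      right_inv := fun U => Subtype.ext (lcBelow_SJoinP U.2) }
    (fun _ _ h _ hp => ⟨hp.1, hp.2.trans h⟩) (fun _ _ h => SJoinP_mono h), fun _ => rfl⟩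
end

section
/- Let L be a frame. A family {a_i}_{i∈I} ⊆ L is exact (i.e., for all b ∈ L, b ∨ ⋀_i a_i = ⋀_i (b ∨ a_i)) if and only if the sublocale ⋁_{i∈I} c(a_i) is closed, i.e., equals c(⋀_i a_i). -/
open Set

variable {L : Type*} [Order.Frame L]

theorem stmt_18 {ι : Type*} (a : ι → L) :
    (∀ b : L, b ⊔ ⨅ i, a i = ⨅ i, b ⊔ a i) ↔
      {x | ∃ M ⊆ ⋃ i, Set.Ici (a i), sInf M = x} = Set.Ici (⨅ i, a i) := by
  constructor
  · intro h
    ext x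
    constructor
    · rintro ⟨M, hM, rfl⟩
      refine le_sInf fun m hm => ?_
      obtain ⟨_, ⟨i, rfl⟩, hi⟩ := hM hm
      exact (iInf_le a i).trans hi
    · intro hx
      refine ⟨Set.range (fun i => x ⊔ a i), ?_, ?_⟩
      · rintro _ ⟨i, rfl⟩
        exact Set.mem_iUnion.2 ⟨i, le_sup_right⟩
      · rw [sInf_range, ← h x]
        exact sup_eq_left.2 hx
  · intro h b
    have key : sInf {s | (∃ M ⊆ ⋃ i, Set.Ici (a i), sInf M = s) ∧ b ≤ s}
        = ⨅ i, b ⊔ a i := by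
      apply le_antisymm
      · refine sInf_le ⟨⟨Set.range (fun i => b ⊔ a i), ?_, sInf_range⟩,
          le_iInf fun i => le_sup_left⟩
        rintro _ ⟨i, rfl⟩
        exact Set.mem_iUnion.2 ⟨i, le_sup_right⟩
      · refine le_sInf ?_
        rintro s ⟨⟨M, hM, rfl⟩, hb⟩
        refine le_sInf fun m hm => ?_
        obtain ⟨_, ⟨i, rfl⟩, hi⟩ := hM hm
        exact iInf_le_of_le i (sup_le (hb.trans (sInf_le hm)) hi)
    have key2 : sInf {s | ⨅ i, a i ≤ s ∧ b ≤ s} = b ⊔ ⨅ i, a i := by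
      apply le_antisymm
      · exact sInf_le ⟨le_sup_right, le_sup_left⟩
      · exact le_sInf fun s hs => sup_le hs.2 hs.1
    have hsets : {s | (∃ M ⊆ ⋃ i, Set.Ici (a i), sInf M = s) ∧ b ≤ s}
        = {s | ⨅ i, a i ≤ s ∧ b ≤ s} := by
      ext s
      have : (∃ M ⊆ ⋃ i, Set.Ici (a i), sInf M = s) ↔ ⨅ i, a i ≤ s := by
        rw [← Set.mem_Ici, ← h]; rfl
      simp only [Set.mem_setOf_eq, this]
    rw [← key2, ← key, hsets]
end
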